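/- Suppose f_θ(X) | {Y = y} ∼ N(μ_y, σ_y²) for y ∈ {−1,+1}, the label marginals p(y) are known with p(Y=1) ≠ p(Y=-1), and L is the exponential loss, log loss, or hinge loss. If (μ̂⁽ⁿ⁾, σ̂⁽ⁿ⁾) → (μ, σ) almost surely, then the plug-in risk estimate R̂_n(θ) = ∑_{y ∈ {−1,+1}} p(y) ∫_ℝ N(α; μ̂_y⁽ⁿ⁾, (σ̂_y⁽ⁿ⁾)²) L(y, α) dα converges almost surely to the true risk R(θ) = ∑_y p(y) ∫_ℝ N(α; μ_y, σ_y²) L(y, α) dα. -/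

import Mathlib

open MeasureTheory ProbabilityTheory Filter Real

/-- Univariate Gaussian density with mean `μ` and standard deviation `σ`. -/
noncomputable def gaussDensity (μ σ x : ℝ) : ℝ :=
  (Real.sqrt (2 * Real.pi * σ ^ 2))⁻¹ * Real.exp (-(x - μ) ^ 2 / (2 * σ ^ 2))

/-- Margin-based risk under Gaussian class-conditional margin distributions with
parameters `η = (μ₁, μ₋₁, σ₁, σ₋₁)` and loss `L`. -/
noncomputable def gaussRisk (p1 pm1 : ℝ) (L : ℝ → ℝ → ℝ) (η : ℝ × ℝ × ℝ × ℝ) : ℝ :=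
  p1 * (∫ α : ℝ, gaussDensity η.1 η.2.2.1 α * L 1 α)
    + pm1 * (∫ α : ℝ, gaussDensity η.2.1 η.2.2.2 α * L (-1) α)

/-!
For `σ ≠ 0` the substitution `α = μ + σ z` rewrites `∫ N(α; μ, σ²) L(y, α) dα` as
`∫ L(y, μ + σ z) dN(0, 1)(z)`: an integral against a fixed measure of an integrand that is jointly
continuous in `(μ, σ)`. The three losses grow at most like `exp(|y| |α|)`, and `N(0, 1)`
integrates every `exp(c |z|)`, so dominated convergence makes the risk continuous at every
parameter with `σ₁, σ₋₁ ≠ 0`. Almost sure convergence of the parameters then transfers to the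
plug-in risk pathwise.
-/

open Topology

lemma continuous_integral_comp_affine_of_exp_growth {E : Type*} [NormedAddCommGroup E]
    [NormedSpace ℝ E] {ν : Measure ℝ} (hν : ∀ t, Integrable (fun z => exp (t * z)) ν)
    {f : ℝ → E} (hf : Continuous f) {C c : ℝ} (hfC : ∀ x, ‖f x‖ ≤ C * exp (c * |x|)) :
    Continuous fun q : ℝ × ℝ => ∫ z, f (q.1 + q.2 * z) ∂ν := by
  have hC_nonneg : 0 ≤ C := le_of_mul_le_mul_right (by simpa using (norm_nonneg _).trans (hfC 0))
    (exp_pos 0)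
  rw [continuous_iff_continuousAt]
  intro q₀
  obtain ⟨R, hR⟩ : ∃ R, R = |q₀.1| + |q₀.2| + 1 := ⟨_, rfl⟩
  set box := {q : ℝ × ℝ | |q.1| < R ∧ |q.2| < R}
  have hbox : box ∈ 𝓝 q₀ :=
    ((isOpen_lt (continuous_abs.comp continuous_fst) continuous_const).inter
      (isOpen_lt (continuous_abs.comp continuous_snd) continuous_const)).mem_nhds
      (show |q₀.1| < R ∧ |q₀.2| < R by constructor <;> linarith [abs_nonneg q₀.1, abs_nonneg q₀.2])
  refine (continuousOn_of_dominated (s := box)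
    (bound := fun z => C * exp (|c| * R) * exp (|c| * R * |z|)) ?_ ?_ ?_ ?_).continuousAt hbox
  · intro q _
    exact (hf.comp (by fun_prop)).aestronglyMeasurable
  · rintro q ⟨h1, h2⟩
    refine ae_of_all _ fun z => (hfC _).trans ?_
    rw [mul_assoc, ← exp_add]
    gcongr
    calc c * |q.1 + q.2 * z| ≤ |c| * |q.1 + q.2 * z| := by gcongr; exact le_abs_self c
      _ ≤ |c| * (|q.1| + |q.2| * |z|) := by
          gcongr
          exact (abs_add_le _ _).trans_eq (by rw [abs_mul])
      _ ≤ |c| * (R + R * |z|) := by gcongr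
      _ = |c| * R + |c| * R * |z| := by ring
  · exact (integrable_exp_mul_abs (X := id) (hν _) (hν _)).const_mul _
  · exact ae_of_all _ fun z => (hf.comp (by fun_prop)).continuousOn

lemma gaussDensity_eq_gaussianPDFReal (μ σ x : ℝ) :
    gaussDensity μ σ x = gaussianPDFReal μ ⟨σ ^ 2, sq_nonneg σ⟩ x := rfl

lemma map_gaussianReal_zero_one_affine (μ σ : ℝ) :
    (gaussianReal 0 1).map (fun z => μ + σ * z) = gaussianReal μ ⟨σ ^ 2, sq_nonneg σ⟩ := by
  have h : (fun z => μ + σ * z) = (μ + ·) ∘ (σ * ·) := rfl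
  rw [h, ← Measure.map_map (by fun_prop) (by fun_prop), gaussianReal_map_const_mul,
    gaussianReal_map_const_add, mul_zero, zero_add, mul_one]
  rfl

/-- At `σ = 0` the density `gaussDensity μ 0` is the zero function (`√0⁻¹ = 0`), not a Dirac mass,
so the identity fails there. -/
lemma integral_gaussDensity_mul_eq_integral_affine {μ σ : ℝ} (hσ : σ ≠ 0) (f : ℝ → ℝ) :
    ∫ α, gaussDensity μ σ α * f α = ∫ z, f (μ + σ * z) ∂gaussianReal 0 1 := by
  have hv : (⟨σ ^ 2, sq_nonneg σ⟩ : NNReal) ≠ 0 := by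
    simpa [← NNReal.coe_eq_zero] using hσ
  have haffine : MeasurableEmbedding fun z => μ + σ * z :=
    ((Homeomorph.mulLeft₀ σ hσ).trans (Homeomorph.addLeft μ)).measurableEmbedding
  calc ∫ α, gaussDensity μ σ α * f α = ∫ α, f α ∂gaussianReal μ ⟨σ ^ 2, sq_nonneg σ⟩ :=
        (integral_gaussianReal_eq_integral_smul hv).symm
    _ = ∫ z, f (μ + σ * z) ∂gaussianReal 0 1 := by
        rw [← map_gaussianReal_zero_one_affine, haffine.integral_map]

lemma continuousAt_gaussRisk {L : ℝ → ℝ → ℝ} (hL : ∀ y, Continuous (L y))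
    (hgrowth : ∀ y, ∃ C c, ∀ α, |L y α| ≤ C * exp (c * |α|)) (p1 pm1 : ℝ)
    {μ1 μm1 σ1 σm1 : ℝ} (hσ1 : σ1 ≠ 0) (hσm1 : σm1 ≠ 0) :
    ContinuousAt (gaussRisk p1 pm1 L) (μ1, μm1, σ1, σm1) := by
  have hI : ∀ y, Continuous fun q : ℝ × ℝ => ∫ z, L y (q.1 + q.2 * z) ∂gaussianReal 0 1 := by
    intro y
    obtain ⟨C, c, hC⟩ := hgrowth y
    exact continuous_integral_comp_affine_of_exp_growth integrable_exp_mul_gaussianReal (hL y) hC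
  have hσ_ne : ∀ᶠ η : ℝ × ℝ × ℝ × ℝ in 𝓝 (μ1, μm1, σ1, σm1), η.2.2.1 ≠ 0 ∧ η.2.2.2 ≠ 0 :=
    (continuous_snd.snd.fst.continuousAt.eventually_ne hσ1).and
      (continuous_snd.snd.snd.continuousAt.eventually_ne hσm1)
  refine ContinuousAt.congr (f := fun η : ℝ × ℝ × ℝ × ℝ =>
      p1 * ∫ z, L 1 (η.1 + η.2.2.1 * z) ∂gaussianReal 0 1
        + pm1 * ∫ z, L (-1) (η.2.1 + η.2.2.2 * z) ∂gaussianReal 0 1) ?_ ?_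
  · exact ((continuous_const.mul ((hI 1).comp (continuous_fst.prodMk continuous_snd.snd.fst))).add
      (continuous_const.mul ((hI (-1)).comp
        (continuous_snd.fst.prodMk continuous_snd.snd.snd)))).continuousAt
  · filter_upwards [hσ_ne] with η ⟨h1, hm1⟩
    simp only [gaussRisk, integral_gaussDensity_mul_eq_integral_affine h1,
      integral_gaussDensity_mul_eq_integral_affine hm1]

lemma abs_exp_neg_mul_le (y α : ℝ) : |exp (-(y * α))| ≤ exp (|y| * |α|) := by
  rw [abs_of_pos (exp_pos _), ← abs_mul]
  exact exp_le_exp.mpr (neg_le_abs _)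

lemma abs_log_one_add_exp_neg_mul_le (y α : ℝ) :
    |log (1 + exp (-(y * α)))| ≤ exp (|y| * |α|) := by
  have hpos : 0 < exp (-(y * α)) := exp_pos _
  rw [abs_of_nonneg (log_nonneg (by linarith))]
  calc log (1 + exp (-(y * α))) ≤ 1 + exp (-(y * α)) - 1 := log_le_sub_one_of_pos (by linarith)
    _ = |exp (-(y * α))| := by rw [add_sub_cancel_left, abs_of_pos hpos]
    _ ≤ exp (|y| * |α|) := abs_exp_neg_mul_le y α

lemma abs_max_one_sub_mul_zero_le (y α : ℝ) : |max (1 - y * α) 0| ≤ exp (|y| * |α|) := by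
  rw [abs_of_nonneg (le_max_right _ _), ← abs_mul]
  refine max_le ?_ (exp_nonneg _)
  linarith [neg_le_abs (y * α), add_one_le_exp |y * α|]

lemma continuous_and_abs_le_exp_of_standard_loss {L : ℝ → ℝ → ℝ}
    (hL : (L = fun y α => exp (-(y * α)))
        ∨ (L = fun y α => log (1 + exp (-(y * α))))
        ∨ (L = fun y α => max (1 - y * α) 0)) :
    (∀ y, Continuous (L y)) ∧ ∀ y α, |L y α| ≤ exp (|y| * |α|) := by
  rcases hL with rfl | rfl | rfl
  · exact ⟨fun y => by fun_prop, abs_exp_neg_mul_le⟩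
  · exact ⟨fun y => (by fun_prop : Continuous _).log fun α => by positivity,
      abs_log_one_add_exp_neg_mul_le⟩
  · exact ⟨fun y => by fun_prop, abs_max_one_sub_mul_zero_le⟩

theorem plugin_risk_consistent_general
    {Ω : Type*} [MeasurableSpace Ω] (P : Measure Ω)
    (p1 pm1 : ℝ)
    (L : ℝ → ℝ → ℝ)
    (hL : (L = fun y α => Real.exp (-(y * α)))
        ∨ (L = fun y α => Real.log (1 + Real.exp (-(y * α))))
        ∨ (L = fun y α => max (1 - y * α) 0))
    (μ1 μm1 σ1 σm1 : ℝ) (hσ1 : 0 < σ1) (hσm1 : 0 < σm1)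
    (ηhat : ℕ → Ω → ℝ × ℝ × ℝ × ℝ)
    (hconv : ∀ᵐ ω ∂P, Tendsto (fun n => ηhat n ω) atTop (nhds (μ1, μm1, σ1, σm1))) :
    ∀ᵐ ω ∂P, Tendsto (fun n => gaussRisk p1 pm1 L (ηhat n ω)) atTop
      (nhds (gaussRisk p1 pm1 L (μ1, μm1, σ1, σm1))) := by
  obtain ⟨hLc, hLb⟩ := continuous_and_abs_le_exp_of_standard_loss hL
  have hcont : ContinuousAt (gaussRisk p1 pm1 L) (μ1, μm1, σ1, σm1) :=
    continuousAt_gaussRisk hLc (fun y => ⟨1, |y|, by simpa using hLb y⟩) p1 pm1 hσ1.ne' hσm1.ne'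
  filter_upwards [hconv] with ω hω using hcont.tendsto.comp hω

/-- Consistency of the plug-in risk estimate: almost sure convergence of the
estimated mixture parameters implies almost sure convergence of the plug-in
risk to the true risk, for the exponential, log, or hinge loss. -/
theorem plugin_risk_consistent
    {Ω : Type*} [MeasurableSpace Ω] (P : Measure Ω) [IsProbabilityMeasure P]
    (p1 pm1 : ℝ) (hp1 : 0 < p1) (hpm1 : 0 < pm1) (hsum : p1 + pm1 = 1) (hne : p1 ≠ pm1)
    (L : ℝ → ℝ → ℝ)
    (hL : (L = fun y α => Real.exp (-(y * α)))
        ∨ (L = fun y α => Real.log (1 + Real.exp (-(y * α))))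
        ∨ (L = fun y α => max (1 - y * α) 0))
    (μ1 μm1 σ1 σm1 : ℝ) (hσ1 : 0 < σ1) (hσm1 : 0 < σm1)
    (ηhat : ℕ → Ω → ℝ × ℝ × ℝ × ℝ)
    (hconv : ∀ᵐ ω ∂P, Tendsto (fun n => ηhat n ω) atTop (nhds (μ1, μm1, σ1, σm1))) :
    ∀ᵐ ω ∂P, Tendsto (fun n => gaussRisk p1 pm1 L (ηhat n ω)) atTop
      (nhds (gaussRisk p1 pm1 L (μ1, μm1, σ1, σm1))) :=
  plugin_risk_consistent_general P p1 pm1 L hL μ1 μm1 σ1 σm1 hσ1 hσm1 ηhat hconv
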